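/- Let G be a finite group, A ⊴ G a normal subgroup, and c ∈ Z²(G,ℂ*) a non-degenerate 2-cocycle (i.e., ℂ^c[G] is a simple algebra, isomorphic to a matrix algebra over ℂ). Then G acts transitively by conjugation on the set of central primitive idempotents of the subalgebra ℂ^{res c}[A] ⊆ ℂ^c[G]. -/

import Mathlib

open scoped BigOperators

noncomputable def tmulC {G : Type} [Group G] [Fintype G] (c : G → G → ℂˣ) (f h : G → ℂ) : G → ℂ :=
  fun δ => ∑ σ : G, (c σ (σ⁻¹ * δ) : ℂ) * f σ * h (σ⁻¹ * δ)

/-- conjugation by `U_τ` in the twisted group algebra. -/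
noncomputable def conjC {G : Type} [Group G] (c : G → G → ℂˣ) (τ : G) (f : G → ℂ) : G → ℂ :=
  fun δ => ((c τ (τ⁻¹ * δ * τ) : ℂ) * ((c δ τ : ℂ))⁻¹) * f (τ⁻¹ * δ * τ)

/-- central idempotent of the subalgebra `ℂ^{res c}[A]`. -/
def IsCentralIdem {G : Type} [Group G] [Fintype G] (c : G → G → ℂˣ) (A : Subgroup G)
    (f : G → ℂ) : Prop :=
  (∀ γ : G, γ ∉ A → f γ = 0) ∧ tmulC c f f = f ∧
  ∀ h : G → ℂ, (∀ γ : G, γ ∉ A → h γ = 0) → tmulC c f h = tmulC c h f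

/-- central primitive idempotent of the subalgebra `ℂ^{res c}[A]`. -/
def IsCPI {G : Type} [Group G] [Fintype G] (c : G → G → ℂˣ) (A : Subgroup G)
    (f : G → ℂ) : Prop :=
  IsCentralIdem c A f ∧ f ≠ 0 ∧
  ∀ f₁ f₂ : G → ℂ, IsCentralIdem c A f₁ → IsCentralIdem c A f₂ → f₁ ≠ 0 → f₂ ≠ 0 →
    tmulC c f₁ f₂ = 0 → f ≠ f₁ + f₂


/-!
View `G → ℂ` with the product `tmulC c` as a ring, the twisted group algebra `ℂ^c[G]`. The basis
vectors `U_τ` are units, and `conjC c τ` is conjugation by `U_τ`, so `G` acts on `ℂ^c[G]` by ring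
automorphisms that preserve `ℂ^{res c}[A]` (as `A` is normal) and hence permute its central
primitive idempotents. Two such idempotents with nonzero product coincide, so the `G`-orbit of one
of them, `f`, consists of orthogonal idempotents. Their sum is a nonzero idempotent fixed under
conjugation by every `U_τ`, hence central in `ℂ^c[G] ≃ Mₙ(ℂ)`, hence equal to `1`. For any other
`f'`, the expansion `f' = f' · 1 = ∑ f' g` has a nonzero term, and `f' g ≠ 0` forces `f' = g`.
-/

open scoped Classical

lemma ConjAct.toConjAct_map_algebraMap_smul {R A : Type*} [CommSemiring R] [Semiring A]
    [Algebra R A] (a : Rˣ) (x : A) :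
    toConjAct (Units.map (algebraMap R A : R →* A) a) • x = x := by
  have h : Commute (Units.map (algebraMap R A : R →* A) a : A) x := Algebra.commutes (a : R) x
  rw [units_smul_def, ofConjAct_toConjAct, h.eq, Units.mul_inv_cancel_right]

lemma eq_zero_or_eq_one_of_forall_commute_of_ringEquiv_matrix {R K n : Type*} [Ring R] [Field K]
    [Fintype n] [DecidableEq n] (φ : R ≃+* Matrix n n K) {e : R} (he : IsIdempotentElem e)
    (hc : ∀ x, Commute e x) : e = 0 ∨ e = 1 := by
  have hcenter : φ e ∈ Set.center (Matrix n n K) := Semigroup.mem_center_iff.mpr fun M => by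
    obtain ⟨x, rfl⟩ := φ.surjective M
    rw [← map_mul, ← map_mul, (hc x).eq]
  rw [Matrix.center_eq_scalar_image] at hcenter
  obtain ⟨r, -, hr⟩ := hcenter
  cases isEmpty_or_nonempty n
  · exact Or.inl (φ.injective (Subsingleton.elim _ _))
  have hr_idem : IsIdempotentElem r := by
    have := he.map φ
    rwa [← hr, IsIdempotentElem, ← map_mul, Matrix.scalar_inj] at this
  rcases IsIdempotentElem.iff_eq_zero_or_one.mp hr_idem with rfl | rfl
  · exact Or.inl (φ.injective (by rw [← hr, map_zero, map_zero]))
  · exact Or.inr (φ.injective (by rw [← hr, map_one, map_one]))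

def IsTwoCocycle {G : Type} [Mul G] (c : G → G → ℂˣ) : Prop :=
  ∀ σ γ τ : G, c σ γ * c (σ * γ) τ = c γ τ * c σ (γ * τ)

namespace IsTwoCocycle

variable {G : Type} [Group G] {c : G → G → ℂˣ}

lemma val_mul (hc : IsTwoCocycle c) (σ γ τ : G) :
    (c σ γ : ℂ) * c (σ * γ) τ = c γ τ * c σ (γ * τ) := by
  exact_mod_cast congrArg Units.val (hc σ γ τ)

lemma map_one_right (hc : IsTwoCocycle c) (σ : G) : c σ 1 = c 1 1 := by
  simpa using hc σ 1 1

lemma map_one_left (hc : IsTwoCocycle c) (τ : G) : c 1 τ = c 1 1 := by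
  simpa using (hc 1 1 τ).symm

lemma map_inv_comm (hc : IsTwoCocycle c) (τ : G) : c τ⁻¹ τ = c τ τ⁻¹ := by
  simpa [hc.map_one_left, hc.map_one_right] using (hc τ τ⁻¹ τ).symm

end IsTwoCocycle

def TwistedGroupAlgebra {G : Type} (_c : G → G → ℂˣ) : Type := G → ℂ

noncomputable section

namespace TwistedGroupAlgebra

section Ring

variable {G : Type} (c : G → G → ℂˣ)

instance : AddCommGroup (TwistedGroupAlgebra c) := inferInstanceAs (AddCommGroup (G → ℂ))

instance : Module ℂ (TwistedGroupAlgebra c) := inferInstanceAs (Module ℂ (G → ℂ))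

def of (τ : G) : TwistedGroupAlgebra c := Pi.single τ 1

variable {c}

@[simp] lemma add_apply (f h : TwistedGroupAlgebra c) (δ : G) : (f + h) δ = f δ + h δ := rfl

@[simp] lemma sub_apply (f h : TwistedGroupAlgebra c) (δ : G) : (f - h) δ = f δ - h δ := rfl

@[simp] lemma zero_apply (δ : G) : (0 : TwistedGroupAlgebra c) δ = 0 := rfl

@[simp] lemma smul_apply (a : ℂ) (f : TwistedGroupAlgebra c) (δ : G) : (a • f) δ = a * f δ := rfl

@[simp] lemma of_apply (τ δ : G) : of c τ δ = if δ = τ then 1 else 0 := Pi.single_apply _ _ _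

lemma sum_smul_of [Fintype G] (f : TwistedGroupAlgebra c) : ∑ τ, f τ • of c τ = f := by
  show ∑ τ, f τ • (Pi.single τ 1 : G → ℂ) = f
  simp_rw [← Pi.single_smul, smul_eq_mul, mul_one]
  exact Finset.univ_sum_single f

variable [Group G]

-- The basis vector `U_1 = of c 1` is `c(1,1) • 1`, not `1`.
instance : One (TwistedGroupAlgebra c) := ⟨((c 1 1 : ℂ))⁻¹ • of c 1⟩

lemma one_def : (1 : TwistedGroupAlgebra c) = ((c 1 1 : ℂ))⁻¹ • of c 1 := rfl

lemma one_apply (δ : G) : (1 : TwistedGroupAlgebra c) δ = if δ = 1 then ((c 1 1 : ℂ))⁻¹ else 0 := by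
  simp [one_def]

variable [Fintype G]

instance : Mul (TwistedGroupAlgebra c) := ⟨tmulC c⟩

lemma mul_apply (f h : TwistedGroupAlgebra c) (δ : G) :
    (f * h) δ = ∑ σ : G, (c σ (σ⁻¹ * δ) : ℂ) * f σ * h (σ⁻¹ * δ) := rfl

protected lemma mul_assoc (hc : IsTwoCocycle c) (f g h : TwistedGroupAlgebra c) :
    f * g * h = f * (g * h) := by
  funext δ
  simp only [mul_apply, Finset.sum_mul, Finset.mul_sum]
  rw [Finset.sum_comm]
  refine Finset.sum_congr rfl fun ρ _ => ?_
  rw [← Equiv.sum_comp (Equiv.mulLeft ρ)]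
  refine Finset.sum_congr rfl fun σ _ => ?_
  have hcoc := hc.val_mul ρ σ (σ⁻¹ * (ρ⁻¹ * δ))
  simp only [Equiv.coe_mulLeft, mul_inv_rev, inv_mul_cancel_left, mul_inv_cancel_left,
    mul_assoc] at hcoc ⊢
  linear_combination (f ρ * g σ * h (σ⁻¹ * (ρ⁻¹ * δ))) * hcoc

protected lemma one_mul (hc : IsTwoCocycle c) (f : TwistedGroupAlgebra c) : 1 * f = f := by
  funext δ
  rw [mul_apply, Finset.sum_eq_single 1 (fun σ _ hσ => by simp [one_apply, hσ]) (by simp)]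
  simp [one_apply, hc.map_one_left]

protected lemma mul_one (hc : IsTwoCocycle c) (f : TwistedGroupAlgebra c) : f * 1 = f := by
  funext δ
  rw [mul_apply, Finset.sum_eq_single δ (fun σ _ hσ => by simp [one_apply, inv_mul_eq_one, hσ])
    (by simp)]
  simp [one_apply, hc.map_one_right, mul_right_comm _ (f δ)]

instance [Fact (IsTwoCocycle c)] : Ring (TwistedGroupAlgebra c) :=
  { (inferInstance : AddCommGroup (TwistedGroupAlgebra c)) with
    mul_assoc := TwistedGroupAlgebra.mul_assoc Fact.out
    one_mul := TwistedGroupAlgebra.one_mul Fact.out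
    mul_one := TwistedGroupAlgebra.mul_one Fact.out
    left_distrib := fun f g h => by
      funext δ; simp only [mul_apply, add_apply, mul_add, Finset.sum_add_distrib]
    right_distrib := fun f g h => by
      funext δ; simp only [mul_apply, add_apply, mul_add, add_mul, Finset.sum_add_distrib]
    zero_mul := fun f => by funext δ; simp [mul_apply]
    mul_zero := fun f => by funext δ; simp [mul_apply] }

instance [Fact (IsTwoCocycle c)] : Algebra ℂ (TwistedGroupAlgebra c) :=
  Algebra.ofModule
    (fun a f h => by
      funext δ; simp only [mul_apply, smul_apply, Finset.mul_sum]
      exact Finset.sum_congr rfl fun _ _ => by ring)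
    (fun a f h => by
      funext δ; simp only [mul_apply, smul_apply, Finset.mul_sum]
      exact Finset.sum_congr rfl fun _ _ => by ring)

end Ring

variable {G : Type} [Group G] [Fintype G] {c : G → G → ℂˣ}

lemma of_mul_apply (τ : G) (f : TwistedGroupAlgebra c) (δ : G) :
    (of c τ * f) δ = c τ (τ⁻¹ * δ) * f (τ⁻¹ * δ) := by
  rw [mul_apply, Finset.sum_eq_single τ (fun σ _ hσ => by simp [hσ]) (by simp)]
  simp

lemma mul_of_apply (f : TwistedGroupAlgebra c) (τ δ : G) :
    (f * of c τ) δ = c (δ * τ⁻¹) τ * f (δ * τ⁻¹) := by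
  rw [mul_apply, Finset.sum_eq_single (δ * τ⁻¹) (fun σ _ hσ => ?_) (by simp)]
  · simp
  · have : σ⁻¹ * δ ≠ τ := fun h => hσ (by rw [← h]; group)
    simp [this]

lemma of_mul_of (τ σ : G) : of c τ * of c σ = (c τ σ : ℂ) • of c (τ * σ) := by
  funext δ
  rw [of_mul_apply]
  by_cases h : δ = τ * σ
  · simp [h]
  · have : τ⁻¹ * δ ≠ σ := fun h' => h (by rw [← h']; group)
    simp [h, this]

variable {A : Subgroup G}

lemma mul_apply_eq_zero_of_notMem {f h : TwistedGroupAlgebra c} (hf : ∀ γ ∉ A, f γ = 0)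
    (hh : ∀ γ ∉ A, h γ = 0) : ∀ γ ∉ A, (f * h) γ = 0 := by
  intro δ hδ
  refine Finset.sum_eq_zero fun σ _ => ?_
  by_cases hσ : σ ∈ A
  · have : σ⁻¹ * δ ∉ A := fun h' => hδ (by simpa using A.mul_mem hσ h')
    simp [hh _ this]
  · simp [hf _ hσ]

lemma isCentralIdem_iff {f : TwistedGroupAlgebra c} :
    IsCentralIdem c A f ↔ (∀ γ ∉ A, f γ = 0) ∧ IsIdempotentElem f ∧
      ∀ h : TwistedGroupAlgebra c, (∀ γ ∉ A, h γ = 0) → Commute f h := Iff.rfl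

variable [Fact (IsTwoCocycle c)]

lemma isCPI_iff {f : TwistedGroupAlgebra c} :
    IsCPI c A f ↔ IsCentralIdem c A f ∧ f ≠ 0 ∧
      ∀ f₁ f₂ : TwistedGroupAlgebra c, IsCentralIdem c A f₁ → IsCentralIdem c A f₂ →
        f₁ ≠ 0 → f₂ ≠ 0 → f₁ * f₂ = 0 → f ≠ f₁ + f₂ := Iff.rfl

variable (c) in
def ofUnit (τ : G) : (TwistedGroupAlgebra c)ˣ where
  val := of c τ
  inv := ((c τ τ⁻¹ : ℂ) * c 1 1)⁻¹ • of c τ⁻¹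
  val_inv := by
    rw [mul_smul_comm, of_mul_of, smul_smul, mul_inv_cancel, one_def]
    congr 1
    field_simp
  inv_val := by
    rw [smul_mul_assoc, of_mul_of, smul_smul, inv_mul_cancel, one_def,
      (Fact.out : IsTwoCocycle c).map_inv_comm]
    congr 1
    field_simp

lemma val_ofUnit (τ : G) : (ofUnit c τ : TwistedGroupAlgebra c) = of c τ := rfl

lemma val_inv_ofUnit (τ : G) :
    (↑(ofUnit c τ)⁻¹ : TwistedGroupAlgebra c) = ((c τ τ⁻¹ : ℂ) * c 1 1)⁻¹ • of c τ⁻¹ := rfl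

lemma ofUnit_mul_ofUnit (τ σ : G) :
    ofUnit c τ * ofUnit c σ =
      Units.map (algebraMap ℂ (TwistedGroupAlgebra c) : ℂ →* _) (c τ σ) * ofUnit c (τ * σ) := by
  ext1
  simp [val_ofUnit, of_mul_of, Algebra.smul_def]

variable (c) in
def conj (τ : G) : TwistedGroupAlgebra c ≃+* TwistedGroupAlgebra c :=
  MulSemiringAction.toRingEquiv _ _ (ConjAct.toConjAct (ofUnit c τ))

lemma conj_def (τ : G) (f : TwistedGroupAlgebra c) :
    conj c τ f = ConjAct.toConjAct (ofUnit c τ) • f := rfl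

lemma conj_apply (τ : G) (f : TwistedGroupAlgebra c) :
    conj c τ f = ofUnit c τ * f * ↑(ofUnit c τ)⁻¹ := ConjAct.units_smul_def _ _

lemma conjC_eq_conj (τ : G) (f : TwistedGroupAlgebra c) : conjC c τ f = conj c τ f := by
  have hc : IsTwoCocycle c := Fact.out
  rw [conj_apply, val_ofUnit, val_inv_ofUnit]
  funext δ
  rw [mul_smul_comm, smul_apply, mul_of_apply, inv_inv, of_mul_apply]
  have key := hc.val_mul δ τ τ⁻¹
  rw [mul_inv_cancel, hc.map_one_right] at key
  simp only [conjC, mul_assoc]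
  field_simp
  linear_combination -f (τ⁻¹ * (δ * τ)) * key

lemma conj_conj (τ σ : G) (f : TwistedGroupAlgebra c) :
    conj c τ (conj c σ f) = conj c (τ * σ) f := by
  rw [conj_def, conj_def, conj_def, smul_smul, ← map_mul, ofUnit_mul_ofUnit, map_mul, mul_smul,
    ConjAct.toConjAct_map_algebraMap_smul]

lemma conj_one (f : TwistedGroupAlgebra c) : conj c 1 f = f :=
  (conj c 1).injective (by rw [conj_conj, mul_one])

lemma conj_inv_conj (τ : G) (f : TwistedGroupAlgebra c) : conj c τ⁻¹ (conj c τ f) = f := by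
  rw [conj_conj, inv_mul_cancel, conj_one]

lemma conj_conj_inv (τ : G) (f : TwistedGroupAlgebra c) : conj c τ (conj c τ⁻¹ f) = f := by
  rw [conj_conj, mul_inv_cancel, conj_one]

lemma commute_of_forall_conj_eq {e : TwistedGroupAlgebra c} (he : ∀ τ, conj c τ e = e)
    (f : TwistedGroupAlgebra c) : Commute e f := by
  have hof : ∀ τ, Commute e (of c τ) := fun τ => by
    have := he τ
    rw [conj_apply, Units.mul_inv_eq_iff_eq_mul] at this
    exact this.symm
  rw [← sum_smul_of f]
  exact Commute.sum_right _ _ _ fun τ _ => (hof τ).smul_right _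

lemma conj_apply_eq_zero_of_notMem (hA : A.Normal) (τ : G) {f : TwistedGroupAlgebra c}
    (hf : ∀ γ ∉ A, f γ = 0) : ∀ γ ∉ A, conj c τ f γ = 0 := by
  intro δ hδ
  have : τ⁻¹ * δ * τ ∉ A := fun h' => hδ (by simpa [mul_assoc] using hA.conj_mem _ h' τ)
  rw [← conjC_eq_conj]
  simp [conjC, hf _ this]

lemma _root_.IsCentralIdem.conj (hA : A.Normal) (τ : G) {f : TwistedGroupAlgebra c}
    (hf : IsCentralIdem c A f) : IsCentralIdem c A (conj c τ f) := by
  rw [isCentralIdem_iff] at hf ⊢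
  obtain ⟨hsupp, hidem, hcomm⟩ := hf
  refine ⟨conj_apply_eq_zero_of_notMem hA τ hsupp, hidem.map _, fun h hh => ?_⟩
  rw [← conj_conj_inv τ h]
  exact (hcomm _ (conj_apply_eq_zero_of_notMem hA τ⁻¹ hh)).map _

lemma _root_.IsCPI.conj (hA : A.Normal) (τ : G) {f : TwistedGroupAlgebra c} (hf : IsCPI c A f) :
    IsCPI c A (conj c τ f) := by
  rw [isCPI_iff] at hf ⊢
  obtain ⟨hcentral, hne, hprim⟩ := hf
  have hconj_ne : ∀ {g : TwistedGroupAlgebra c}, g ≠ 0 → TwistedGroupAlgebra.conj c τ⁻¹ g ≠ 0 :=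
    fun hg => (map_ne_zero_iff _ (TwistedGroupAlgebra.conj c τ⁻¹).injective).mpr hg
  refine ⟨hcentral.conj hA τ, (map_ne_zero_iff _ (TwistedGroupAlgebra.conj c τ).injective).mpr hne,
    fun f₁ f₂ h₁ h₂ hne₁ hne₂ horth heq => ?_⟩
  refine hprim _ _ (h₁.conj hA τ⁻¹) (h₂.conj hA τ⁻¹) (hconj_ne hne₁) (hconj_ne hne₂)
    (by rw [← map_mul, horth, map_zero]) ?_
  rw [← map_add, ← heq, conj_inv_conj]

lemma _root_.IsCentralIdem.mul {f g : TwistedGroupAlgebra c} (hf : IsCentralIdem c A f)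
    (hg : IsCentralIdem c A g) : IsCentralIdem c A (f * g) := by
  rw [isCentralIdem_iff] at hf hg ⊢
  exact ⟨mul_apply_eq_zero_of_notMem hf.1 hg.1, hf.2.1.mul_of_commute (hf.2.2 g hg.1) hg.2.1,
    fun h hh => (hf.2.2 h hh).mul_left (hg.2.2 h hh)⟩

lemma _root_.IsCentralIdem.sub {f p : TwistedGroupAlgebra c} (hf : IsCentralIdem c A f)
    (hp : IsCentralIdem c A p) (hfp : f * p = p) : IsCentralIdem c A (f - p) := by
  rw [isCentralIdem_iff] at hf hp ⊢
  obtain ⟨hf_supp, hf_idem, hf_comm⟩ := hf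
  obtain ⟨hp_supp, hp_idem, hp_comm⟩ := hp
  have hpf : p * f = p := (hf_comm p hp_supp).eq ▸ hfp
  exact ⟨fun γ hγ => by rw [sub_apply, hf_supp γ hγ, hp_supp γ hγ, sub_zero],
    hp_idem.sub hf_idem hpf hfp, fun h hh => (hf_comm h hh).sub_left (hp_comm h hh)⟩

lemma _root_.IsCPI.eq_of_mul_eq {f p : TwistedGroupAlgebra c} (hf : IsCPI c A f)
    (hp : IsCentralIdem c A p) (hp0 : p ≠ 0) (hfp : f * p = p) : f = p := by
  rw [isCPI_iff] at hf
  obtain ⟨hf_central, -, hprim⟩ := hf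
  have hpf : p * f = p := ((isCentralIdem_iff.mp hf_central).2.2 p hp.1).eq ▸ hfp
  by_contra hne
  refine hprim p (f - p) hp (hf_central.sub hp hfp) hp0 (sub_ne_zero.mpr hne) ?_
    (add_sub_cancel p f).symm
  rw [mul_sub, hpf, (isCentralIdem_iff.mp hp).2.1.eq, sub_self]

lemma _root_.IsCPI.eq_of_mul_ne_zero {f g : TwistedGroupAlgebra c} (hf : IsCPI c A f)
    (hg : IsCPI c A g) (hfg : f * g ≠ 0) : f = g := by
  obtain ⟨-, hf_idem, hf_comm⟩ := isCentralIdem_iff.mp hf.1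
  obtain ⟨-, hg_idem, -⟩ := isCentralIdem_iff.mp hg.1
  have hgf : g * (f * g) = f * g := by
    rw [(hf_comm g hg.1.1).eq, ← mul_assoc, hg_idem.eq]
  have hp := hf.1.mul hg.1
  exact (hf.eq_of_mul_eq hp hfg (by rw [← mul_assoc, hf_idem.eq])).trans
    (hg.eq_of_mul_eq hp hfg hgf).symm

variable (c) in
def orbit (f : TwistedGroupAlgebra c) : Finset (TwistedGroupAlgebra c) :=
  Finset.univ.image fun γ => conj c γ f

lemma mem_orbit {f g : TwistedGroupAlgebra c} : g ∈ orbit c f ↔ ∃ γ, conj c γ f = g := by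
  simp [orbit]

lemma conj_sum_orbit (τ : G) (f : TwistedGroupAlgebra c) :
    conj c τ (∑ g ∈ orbit c f, g) = ∑ g ∈ orbit c f, g := by
  rw [map_sum]
  refine Finset.sum_nbij' (conj c τ) (conj c τ⁻¹) (fun g hg => ?_) (fun g hg => ?_)
    (fun g _ => conj_inv_conj τ g) (fun g _ => conj_conj_inv τ g) (fun _ _ => rfl)
  · obtain ⟨γ, rfl⟩ := mem_orbit.mp hg
    exact mem_orbit.mpr ⟨τ * γ, (conj_conj τ γ f).symm⟩
  · obtain ⟨γ, rfl⟩ := mem_orbit.mp hg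
    exact mem_orbit.mpr ⟨τ⁻¹ * γ, (conj_conj τ⁻¹ γ f).symm⟩

lemma orthogonalIdempotents_orbit (hA : A.Normal) {f : TwistedGroupAlgebra c} (hf : IsCPI c A f) :
    OrthogonalIdempotents ((↑) : orbit c f → TwistedGroupAlgebra c) := by
  have hcpi : ∀ g ∈ orbit c f, IsCPI c A g := fun g hg => by
    obtain ⟨γ, rfl⟩ := mem_orbit.mp hg
    exact hf.conj hA γ
  refine ⟨fun g => (isCentralIdem_iff.mp (hcpi g g.2).1).2.1, fun g g' hne => ?_⟩
  by_contra h
  exact hne (Subtype.ext ((hcpi g g.2).eq_of_mul_ne_zero (hcpi g' g'.2) h))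

lemma sum_orbit_eq_one {n : ℕ} (φ : TwistedGroupAlgebra c ≃+* Matrix (Fin n) (Fin n) ℂ)
    (hA : A.Normal) {f : TwistedGroupAlgebra c} (hf : IsCPI c A f) :
    ∑ g ∈ orbit c f, g = 1 := by
  have horth := orthogonalIdempotents_orbit hA hf
  have hf_mem : f ∈ orbit c f := mem_orbit.mpr ⟨1, conj_one f⟩
  have hf_mul : f * ∑ g ∈ orbit c f, g = f := by
    have := horth.mul_sum_of_mem (i := ⟨f, hf_mem⟩) (Finset.mem_univ _)
    rwa [Finset.sum_coe_sort (orbit c f) fun g => g] at this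
  have hidem : IsIdempotentElem (∑ g ∈ orbit c f, g) := by
    have := horth.isIdempotentElem_sum (s := Finset.univ)
    rwa [Finset.sum_coe_sort (orbit c f) fun g => g] at this
  refine (eq_zero_or_eq_one_of_forall_commute_of_ringEquiv_matrix φ hidem
    (commute_of_forall_conj_eq fun τ => conj_sum_orbit τ f)).resolve_left fun h0 => ?_
  exact (isCPI_iff.mp hf).2.1 (by rw [← hf_mul, h0, mul_zero])

end TwistedGroupAlgebra

end

open TwistedGroupAlgebra

theorem stmt16 {G : Type} [Group G] [Fintype G]
    (A : Subgroup G) (hA : A.Normal)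
    (c : G → G → ℂˣ)
    (hcoc : ∀ σ γ τ : G, c σ γ * c (σ * γ) τ = c γ τ * c σ (γ * τ))
    (hnd : ∃ (n : ℕ) (e : (G → ℂ) ≃ₗ[ℂ] Matrix (Fin n) (Fin n) ℂ),
      ∀ f h : G → ℂ, e (tmulC c f h) = e f * e h) :
    ∀ f f' : G → ℂ, IsCPI c A f → IsCPI c A f' → ∃ γ : G, conjC c γ f = f' := by
  have : Fact (IsTwoCocycle c) := ⟨hcoc⟩
  obtain ⟨n, e, he⟩ := hnd
  let φ : TwistedGroupAlgebra c ≃+* Matrix (Fin n) (Fin n) ℂ :=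
    { e.toEquiv with map_mul' := he, map_add' := e.map_add }
  intro (f : TwistedGroupAlgebra c) (f' : TwistedGroupAlgebra c) hf hf'
  obtain ⟨g, hg, hne⟩ : ∃ g ∈ orbit c f, f' * g ≠ 0 := by
    by_contra! h
    refine (isCPI_iff.mp hf').2.1 ?_
    rw [← mul_one f', ← sum_orbit_eq_one φ hA hf, Finset.mul_sum, Finset.sum_eq_zero h]
  obtain ⟨γ, rfl⟩ := mem_orbit.mp hg
  exact ⟨γ, (conjC_eq_conj γ f).trans (hf'.eq_of_mul_ne_zero (hf.conj hA γ) hne).symm⟩
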